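/- If ν − αₙ ≤ 0, where αₙ is the largest diagonal entry of D, then g(w) = (1/2)((1/2)‖w‖² − ν)² + (1/2)wᵀDw − ψᵀw has no local maximizer. -/

import Mathlib

/-!
Move `w` along a coordinate axis `e_k` with `ν ≤ α_k`. Writing `u = t w_k + t²/2` for the change of
`‖w‖²/2` and `β = ‖w‖²/2 - ν + α_k`, one finds
`g(w + t e_k) = g(w) + (β w_k - ψ_k) t + (β t² + u²)/2`.
Since `β ≥ ‖w‖²/2 ≥ w_k²/2`, the remainder `β t² + u²` is positive for `t ≠ 0` (when `β = 0` through
the quartic part of `u²`), so `t ↦ g(w + t e_k)` lies strictly above a line through its value at `0`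
and `w` cannot be a local maximizer.
-/

open Finset Filter Topology

lemma not_isLocalMax_of_add_mul_lt {φ : ℝ → ℝ} {a : ℝ} (h : ∀ t ≠ 0, φ 0 + a * t < φ t) :
    ¬ IsLocalMax φ 0 := by
  intro hmax
  rcases le_or_gt 0 a with ha | ha
  · have hright : ∀ᶠ t in 𝓝[>] (0 : ℝ), φ t ≤ φ 0 := nhdsWithin_le_nhds hmax
    obtain ⟨t, ht, hφt⟩ := (eventually_mem_nhdsWithin.and hright).exists
    nlinarith [h t (Set.mem_Ioi.mp ht).ne', Set.mem_Ioi.mp ht]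
  · have hleft : ∀ᶠ t in 𝓝[<] (0 : ℝ), φ t ≤ φ 0 := nhdsWithin_le_nhds hmax
    obtain ⟨t, ht, hφt⟩ := (eventually_mem_nhdsWithin.and hleft).exists
    nlinarith [h t (Set.mem_Iio.mp ht).ne, Set.mem_Iio.mp ht]

lemma sum_apply_add_single {ι : Type*} [Fintype ι] [DecidableEq ι] (F : ι → ℝ → ℝ)
    (w : ι → ℝ) (k : ι) (t : ℝ) :
    ∑ i, F i ((w + Pi.single k t : ι → ℝ) i) = ∑ i, F i (w i) + (F k (w k + t) - F k (w k)) := by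
  rw [← sub_eq_iff_eq_add', ← sum_sub_distrib, sum_eq_single k]
  · simp
  · intro i _ hik
    simp [Pi.single_eq_of_ne hik]
  · simp

lemma quartic_remainder_pos {x β t : ℝ} (hβ : x ^ 2 ≤ 2 * β) (ht : t ≠ 0) :
    0 < β * t ^ 2 + (t * x + t ^ 2 / 2) ^ 2 := by
  have ht2 : 0 < t ^ 2 := by positivity
  nlinarith [sq_nonneg (t * x + t ^ 2 / 3), mul_le_mul_of_nonneg_right hβ ht2.le]

noncomputable def quarticObjective {ι : Type*} [Fintype ι] (α ψ : ι → ℝ) (ν : ℝ) (w : ι → ℝ) : ℝ :=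
  (1/2) * ((1/2) * ∑ i, (w i)^2 - ν)^2 + (1/2) * ∑ i, α i * (w i)^2 - ∑ i, ψ i * w i

section

variable {ι : Type*} [Fintype ι] [DecidableEq ι] {α ψ : ι → ℝ} {ν : ℝ}

lemma quarticObjective_add_single (w : ι → ℝ) (k : ι) (t : ℝ) :
    quarticObjective α ψ ν (w + Pi.single k t) =
      quarticObjective α ψ ν w
        + (w k * ((1/2) * ∑ i, (w i)^2 - ν + α k) - ψ k) * t
        + (((1/2) * ∑ i, (w i)^2 - ν + α k) * t ^ 2 + (t * w k + t ^ 2 / 2) ^ 2) / 2 := by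
  simp only [quarticObjective]
  rw [sum_apply_add_single (fun _ x => x ^ 2), sum_apply_add_single (fun i x => α i * x ^ 2),
    sum_apply_add_single (fun i x => ψ i * x)]
  ring

lemma not_isLocalMax_quarticObjective {k : ι} (hk : ν ≤ α k) (w : ι → ℝ) :
    ¬ IsLocalMax (quarticObjective α ψ ν) w := by
  intro hw
  let γ : ℝ → ι → ℝ := fun t => w + Pi.single k t
  have hcont : Continuous γ :=
    continuous_const.add (continuous_single (A := fun _ : ι => ℝ) k)
  have h0 : IsLocalMax (quarticObjective α ψ ν) (γ 0) := by
    simpa [γ] using hw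
  have hwk : w k ^ 2 ≤ ∑ i, w i ^ 2 := single_le_sum (fun i _ => sq_nonneg (w i)) (mem_univ k)
  refine not_isLocalMax_of_add_mul_lt
    (a := w k * ((1/2) * ∑ i, (w i)^2 - ν + α k) - ψ k) (fun t ht => ?_)
    (h0.comp_continuous hcont.continuousAt)
  have hrem := quartic_remainder_pos (x := w k) (β := (1/2) * ∑ i, (w i)^2 - ν + α k)
    (by linarith) ht
  simp only [Function.comp_apply, γ, quarticObjective_add_single, Pi.single_zero, add_zero]
  linarith

end

theorem stmt14 {n : ℕ} (hn : 1 ≤ n) (α ψ : Fin n → ℝ) (ν : ℝ)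
    (hν : ν - α ⟨n - 1, by omega⟩ ≤ 0)
    (g : (Fin n → ℝ) → ℝ)
    (hg : ∀ w, g w = (1/2) * ((1/2) * ∑ i, (w i)^2 - ν)^2
        + (1/2) * ∑ i, α i * (w i)^2 - ∑ i, ψ i * w i) :
    ¬ ∃ w : Fin n → ℝ, IsLocalMax g w := by
  rintro ⟨w, hw⟩
  obtain rfl : g = quarticObjective α ψ ν := funext hg
  exact not_isLocalMax_quarticObjective (sub_nonpos.mp hν) w hw
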